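/- Let C = W_D^A for some D ⊆ A ⊆ Φ⁺ (a convex subset of W) with |C| > 1, and for β ∈ Φ define h(β) = (1/|C|) Σ_{w∈C} ht(wβ). Then there exists β ∈ Φ⁺ such that |h(β)| < 1. -/

import Mathlib

open InnerProductSpace

noncomputable section

variable {E : Type*} [NormedAddCommGroup E] [InnerProductSpace ℝ E]

/-- The reflection across the hyperplane orthogonal to `α`:
`s_α(x) = x − (2⟨α,x⟩/⟨α,α⟩)α`. -/
def sRefl (α x : E) : E := x - (2 * ⟪α, x⟫_ℝ / ⟪α, α⟫_ℝ) • α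

/-- `Φ` is a finite crystallographic (reduced) root system spanning `E`. -/
def IsRootSystem (Φ : Set E) : Prop :=
  Φ.Finite ∧ (0 : E) ∉ Φ ∧ Submodule.span ℝ Φ = ⊤ ∧
    (∀ α ∈ Φ, ∀ β ∈ Φ, sRefl α β ∈ Φ) ∧
    (∀ α ∈ Φ, ∀ β ∈ Φ, ∃ n : ℤ, 2 * ⟪α, β⟫_ℝ / ⟪α, α⟫_ℝ = (n : ℝ)) ∧
    (∀ α ∈ Φ, ∀ t : ℝ, t • α ∈ Φ → t = 1 ∨ t = -1)

/-- `b` is a base of the root system `Φ`: a basis of `E` consisting of roots such that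
every root is a linear combination of the base whose coefficients are either all
nonnegative integers or all nonpositive integers. -/
def IsBase (Φ : Set E) {r : ℕ} (b : Module.Basis (Fin r) ℝ E) : Prop :=
  (∀ i, b i ∈ Φ) ∧
    ∀ α ∈ Φ, (∀ i, ∃ k : ℕ, b.repr α i = (k : ℝ)) ∨ (∀ i, ∃ k : ℕ, b.repr α i = -(k : ℝ))

/-- The positive roots with respect to the base `b`. -/
def posRoots (Φ : Set E) {r : ℕ} (b : Module.Basis (Fin r) ℝ E) : Set E :=
  {α ∈ Φ | ∀ i, 0 ≤ b.repr α i}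

/-- The root poset order: `α ≤ β` iff `β − α` is a nonnegative combination of simple roots. -/
def rootLE {r : ℕ} (b : Module.Basis (Fin r) ℝ E) (α β : E) : Prop :=
  ∀ i, 0 ≤ b.repr (β - α) i

/-- `A` is an order ideal of the root poset. -/
def IsRootIdeal (Φ : Set E) {r : ℕ} (b : Module.Basis (Fin r) ℝ E) (A : Set E) : Prop :=
  A ⊆ posRoots Φ b ∧ ∀ α ∈ posRoots Φ b, ∀ β ∈ A, rootLE b α β → α ∈ A

/-- The Weyl group of `Φ`: the subgroup of linear automorphisms of `E` generated by the
reflections `s_α`, `α ∈ Φ`. -/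
def weylGroup (Φ : Set E) : Subgroup (E ≃ₗ[ℝ] E) :=
  Subgroup.closure {g | ∃ α ∈ Φ, ∀ x, g x = sRefl α x}

/-- The inversion set `I(w) = {α ∈ Φ⁺ : wα ∈ −Φ⁺}`. -/
def invSet (Φ : Set E) {r : ℕ} (b : Module.Basis (Fin r) ℝ E) (w : E ≃ₗ[ℝ] E) : Set E :=
  {α ∈ posRoots Φ b | -(w α) ∈ posRoots Φ b}

/-- The convex subset `W_D^A = {w ∈ W : D ⊆ I(w) ⊆ A}` of the Weyl group. -/
def convexSubset (Φ : Set E) {r : ℕ} (b : Module.Basis (Fin r) ℝ E) (D A : Set E) :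
    Set (E ≃ₗ[ℝ] E) :=
  {w | w ∈ weylGroup Φ ∧ D ⊆ invSet Φ b w ∧ invSet Φ b w ⊆ A}

/-- `δ_C(α) = |C_α|/|C|` where `C_α = {w ∈ C : wα ∈ −Φ⁺}`. -/
def delta (Φ : Set E) {r : ℕ} (b : Module.Basis (Fin r) ℝ E) (C : Set (E ≃ₗ[ℝ] E)) (α : E) : ℝ :=
  ({w ∈ C | -(w α) ∈ posRoots Φ b}.ncard : ℝ) / (C.ncard : ℝ)

end

/-!
Let `ρ` be the sum of the fundamental coweights, so `⟪α_i, ρ⟫ = 1` for every simple root and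
`h(β) = ⟪β, μ⟫`, where `μ` is the average of the points `w⁻¹ ρ`, `w ∈ C`. An element of `W`
mapping `Φ⁺` into `Φ⁺` is the identity (exchange argument on words in simple reflections), so
the stabilizer of `ρ` is trivial and these `|C| ≥ 2` points are distinct points of the sphere of
radius `‖ρ‖`; by strict convexity `‖μ‖ < ‖ρ‖`. If instead `|⟪β, μ⟫| ≥ 1` for every positive root,
move `μ` into the dominant chamber by some `u ∈ W`. Then `⟪α_i, uμ⟫ ≥ 1`, so `uμ - ρ` is dominant;
since the base is obtuse, `ρ` is a nonnegative combination of simple roots, hence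
`⟪ρ, uμ - ρ⟫ ≥ 0` and `‖μ‖ = ‖uμ‖ ≥ ‖ρ‖`.
-/

section

variable {E : Type*} [NormedAddCommGroup E] [InnerProductSpace ℝ E] {Φ : Set E} {r : ℕ}
  {b : Module.Basis (Fin r) ℝ E} {ρ : E}

lemma inner_sRefl_sRefl (α x y : E) : ⟪sRefl α x, sRefl α y⟫_ℝ = ⟪x, y⟫_ℝ := by
  rcases eq_or_ne α 0 with rfl | hα
  · simp [sRefl]
  have : ⟪α, α⟫_ℝ ≠ 0 := inner_self_ne_zero.mpr hα
  simp only [sRefl, inner_sub_left, inner_sub_right, real_inner_smul_left,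
    real_inner_smul_right, real_inner_comm x α]
  field_simp
  ring

lemma sRefl_sRefl (α x : E) : sRefl α (sRefl α x) = x := by
  rcases eq_or_ne α 0 with rfl | hα
  · simp [sRefl]
  have : ⟪α, α⟫_ℝ ≠ 0 := inner_self_ne_zero.mpr hα
  have key : 2 * ⟪α, sRefl α x⟫_ℝ / ⟪α, α⟫_ℝ = -(2 * ⟪α, x⟫_ℝ / ⟪α, α⟫_ℝ) := by
    simp only [sRefl, inner_sub_right, real_inner_smul_right]
    field_simp
    ring
  rw [sRefl, key, neg_smul, sub_neg_eq_add, sRefl, sub_add_cancel]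

lemma sRefl_self {α : E} (hα : α ≠ 0) : sRefl α α = -α := by
  rw [sRefl, mul_div_assoc, div_self (inner_self_ne_zero.mpr hα), mul_one, two_smul,
    sub_add_cancel_left]

lemma sRefl_neg_left (α x : E) : sRefl (-α) x = sRefl α x := by
  simp only [sRefl, inner_neg_left, inner_neg_right, neg_neg, mul_neg, neg_div, neg_smul, smul_neg]

noncomputable def reflEquiv (α : E) : E ≃ₗ[ℝ] E where
  toFun := sRefl α
  invFun := sRefl α
  left_inv := sRefl_sRefl α
  right_inv := sRefl_sRefl α
  map_add' x y := by
    simp only [sRefl, inner_add_right, mul_add, add_div, add_smul]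
    abel
  map_smul' t x := by
    simp only [sRefl, real_inner_smul_right, RingHom.id_apply, smul_sub, smul_smul]
    congr 2
    ring

@[simp] lemma reflEquiv_apply (α x : E) : reflEquiv α x = sRefl α x := rfl

lemma reflEquiv_mul_self (α : E) : reflEquiv α * reflEquiv α = 1 :=
  LinearEquiv.ext (sRefl_sRefl α)

lemma reflEquiv_inv (α : E) : (reflEquiv α)⁻¹ = reflEquiv α :=
  inv_eq_of_mul_eq_one_right (reflEquiv_mul_self α)

lemma reflEquiv_neg (α : E) : reflEquiv (-α) = reflEquiv α :=
  LinearEquiv.ext (sRefl_neg_left α)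

lemma reflEquiv_apply_eq_conj {w : E ≃ₗ[ℝ] E} (hw : ∀ x y, ⟪w x, w y⟫_ℝ = ⟪x, y⟫_ℝ) (α : E) :
    reflEquiv (w α) = w * reflEquiv α * w⁻¹ := by
  refine LinearEquiv.ext fun x => ?_
  obtain ⟨y, rfl⟩ := w.surjective x
  change sRefl (w α) (w y) = w (sRefl α (w.symm (w y)))
  simp only [sRefl, hw, map_sub, map_smul, LinearEquiv.symm_apply_apply]

lemma weylGroup_eq_closure (Φ : Set E) : weylGroup Φ = Subgroup.closure (reflEquiv '' Φ) := by
  refine congrArg Subgroup.closure (Set.ext fun g => ⟨?_, ?_⟩)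
  · rintro ⟨α, hα, hg⟩
    exact ⟨α, hα, LinearEquiv.ext fun x => (hg x).symm⟩
  · rintro ⟨α, hα, rfl⟩
    exact ⟨α, hα, fun _ => rfl⟩

lemma reflEquiv_mem_weylGroup {α : E} (hα : α ∈ Φ) : reflEquiv α ∈ weylGroup Φ := by
  rw [weylGroup_eq_closure]
  exact Subgroup.subset_closure ⟨α, hα, rfl⟩

@[elab_as_elim]
lemma weylGroup_induction {p : (E ≃ₗ[ℝ] E) → Prop} (one : p 1)
    (reflEquiv_mul : ∀ α ∈ Φ, ∀ w, p w → p (reflEquiv α * w)) {w : E ≃ₗ[ℝ] E}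
    (hw : w ∈ weylGroup Φ) : p w := by
  rw [weylGroup_eq_closure] at hw
  induction hw using Subgroup.closure_induction_left with
  | one => exact one
  | mul_left _ hs _ _ ih =>
    obtain ⟨α, hα, rfl⟩ := hs
    exact reflEquiv_mul α hα _ ih
  | inv_mul_cancel _ hs _ _ ih =>
    obtain ⟨α, hα, rfl⟩ := hs
    rw [reflEquiv_inv]
    exact reflEquiv_mul α hα _ ih

lemma inner_map_map_of_mem_weylGroup {w : E ≃ₗ[ℝ] E} (hw : w ∈ weylGroup Φ) (x y : E) :
    ⟪w x, w y⟫_ℝ = ⟪x, y⟫_ℝ := by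
  refine weylGroup_induction (p := fun w => ∀ x y, ⟪w x, w y⟫_ℝ = ⟪x, y⟫_ℝ) (fun _ _ => rfl)
    (fun α _ w ih x y => (inner_sRefl_sRefl α _ _).trans (ih x y)) hw x y

lemma inner_map_left_of_mem_weylGroup {w : E ≃ₗ[ℝ] E} (hw : w ∈ weylGroup Φ) (x y : E) :
    ⟪w x, y⟫_ℝ = ⟪x, w⁻¹ y⟫_ℝ := by
  rw [← inner_map_map_of_mem_weylGroup hw x, ← LinearEquiv.mul_apply, mul_inv_cancel]
  rfl

lemma norm_map_of_mem_weylGroup {w : E ≃ₗ[ℝ] E} (hw : w ∈ weylGroup Φ) (x : E) : ‖w x‖ = ‖x‖ := by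
  rw [norm_eq_sqrt_real_inner, norm_eq_sqrt_real_inner, inner_map_map_of_mem_weylGroup hw]

lemma IsRootSystem.sRefl_mem (hΦ : IsRootSystem Φ) {α β : E} (hα : α ∈ Φ) (hβ : β ∈ Φ) :
    sRefl α β ∈ Φ :=
  hΦ.2.2.2.1 α hα β hβ

lemma IsRootSystem.apply_mem_of_mem_weylGroup (hΦ : IsRootSystem Φ) {w : E ≃ₗ[ℝ] E}
    (hw : w ∈ weylGroup Φ) {α : E} (hα : α ∈ Φ) : w α ∈ Φ := by
  refine weylGroup_induction (p := fun w => ∀ α ∈ Φ, w α ∈ Φ) (fun _ => id)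
    (fun β hβ w ih α hα => hΦ.sRefl_mem hβ (ih α hα)) hw α hα

lemma IsRootSystem.finite_weylGroup (hΦ : IsRootSystem Φ) : Finite (weylGroup Φ) := by
  have : Finite Φ := hΦ.1.to_subtype
  refine Finite.of_injective (fun w (α : Φ) => (⟨w.1 α, hΦ.apply_mem_of_mem_weylGroup w.2 α.2⟩ : Φ))
    fun w w' h => Subtype.ext (LinearEquiv.toLinearMap_injective ?_)
  exact LinearMap.ext_on hΦ.2.2.1 fun α hα => congrArg Subtype.val (congrFun h ⟨α, hα⟩)

noncomputable def height (b : Module.Basis (Fin r) ℝ E) : E →ₗ[ℝ] ℝ := ∑ i, b.coord i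

lemma height_apply (x : E) : height b x = ∑ i, b.repr x i := by
  simp [height]

lemma height_basis (i : Fin r) : height b (b i) = 1 := by
  simp [height_apply, Finsupp.single_apply]

lemma inner_eq_height (hρ : ∀ i, ⟪b i, ρ⟫_ℝ = 1) (x : E) : ⟪x, ρ⟫_ℝ = height b x := by
  conv_lhs => rw [← b.sum_repr x]
  simp only [height_apply, sum_inner, real_inner_smul_left, hρ, mul_one]

lemma height_sRefl_basis (i : Fin r) (x : E) :
    height b (sRefl (b i) x) = height b x - 2 * ⟪b i, x⟫_ℝ / ⟪b i, b i⟫_ℝ := by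
  simp [sRefl, height_basis]

lemma repr_sRefl_basis_of_ne {i k : Fin r} (hki : k ≠ i) (x : E) :
    b.repr (sRefl (b i) x) k = b.repr x k := by
  simp [sRefl, hki.symm]

lemma IsRootSystem.ne_zero (hΦ : IsRootSystem Φ) {α : E} (hα : α ∈ Φ) : α ≠ 0 :=
  fun h => hΦ.2.1 (h ▸ hα)

lemma IsRootSystem.neg_mem (hΦ : IsRootSystem Φ) {α : E} (hα : α ∈ Φ) : -α ∈ Φ :=
  sRefl_self (hΦ.ne_zero hα) ▸ hΦ.sRefl_mem hα hα

lemma IsRootSystem.one_le_of_inner_pos (hΦ : IsRootSystem Φ) {α β : E} (hα : α ∈ Φ)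
    (hβ : β ∈ Φ) (h : 0 < ⟪α, β⟫_ℝ) : 1 ≤ 2 * ⟪α, β⟫_ℝ / ⟪α, α⟫_ℝ := by
  obtain ⟨n, hn⟩ := hΦ.2.2.2.2.1 α hα β hβ
  have hpos : (0 : ℝ) < n :=
    hn ▸ div_pos (by positivity) (real_inner_self_pos.mpr (hΦ.ne_zero hα))
  rw [hn]
  exact_mod_cast (Int.cast_pos.mp hpos : 0 < n)

lemma IsBase.repr_nonneg_or_nonpos (hb : IsBase Φ b) {γ : E} (hγ : γ ∈ Φ) :
    (∀ i, 0 ≤ b.repr γ i) ∨ ∀ i, b.repr γ i ≤ 0 := by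
  refine (hb.2 γ hγ).imp (fun h i => ?_) (fun h i => ?_) <;> obtain ⟨k, hk⟩ := h i <;>
    simp [hk]

lemma IsBase.basis_mem_posRoots (hb : IsBase Φ b) (i : Fin r) : b i ∈ posRoots Φ b :=
  ⟨hb.1 i, fun j => by simp only [b.repr_self, Finsupp.single_apply]; split_ifs <;> norm_num⟩

lemma IsBase.mem_posRoots_or_neg_mem (hΦ : IsRootSystem Φ) (hb : IsBase Φ b) {γ : E}
    (hγ : γ ∈ Φ) : γ ∈ posRoots Φ b ∨ -γ ∈ posRoots Φ b :=
  (hb.repr_nonneg_or_nonpos hγ).imp (fun h => ⟨hγ, h⟩)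
    fun h => ⟨hΦ.neg_mem hγ, fun i => by simpa using h i⟩

lemma IsBase.one_le_height (hΦ : IsRootSystem Φ) (hb : IsBase Φ b) {γ : E}
    (hγ : γ ∈ posRoots Φ b) : 1 ≤ height b γ := by
  obtain ⟨i, hi⟩ : ∃ i, b.repr γ i ≠ 0 := by
    by_contra! h
    exact hΦ.ne_zero hγ.1 (b.repr.injective (Finsupp.ext fun i => by simpa using h i))
  obtain ⟨k, hk⟩ : ∃ k : ℕ, b.repr γ i = k := by
    rcases hb.2 γ hγ.1 with h | h <;> obtain ⟨k, hk⟩ := h i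
    · exact ⟨k, hk⟩
    · exact absurd (le_antisymm (hk ▸ neg_nonpos.mpr (Nat.cast_nonneg k)) (hγ.2 i)) hi
  have hk1 : 1 ≤ b.repr γ i := by
    rw [hk] at hi ⊢
    exact_mod_cast Nat.one_le_iff_ne_zero.mpr (by exact_mod_cast hi)
  rw [height_apply]
  exact hk1.trans (Finset.single_le_sum (fun j _ => hγ.2 j) (Finset.mem_univ i))

lemma IsBase.neg_notMem_posRoots (hΦ : IsRootSystem Φ) (hb : IsBase Φ b) {γ : E}
    (hγ : γ ∈ posRoots Φ b) : -γ ∉ posRoots Φ b := fun hγ' => by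
  have h₁ := hb.one_le_height hΦ hγ
  have h₂ := hb.one_le_height hΦ hγ'
  rw [map_neg] at h₂
  linarith

lemma IsBase.mem_posRoots_of_height_pos (hΦ : IsRootSystem Φ) (hb : IsBase Φ b) {γ : E}
    (hγ : γ ∈ Φ) (h : 0 < height b γ) : γ ∈ posRoots Φ b :=
  (hb.mem_posRoots_or_neg_mem hΦ hγ).resolve_right fun hγ' => by
    have := hb.one_le_height hΦ hγ'
    rw [map_neg] at this
    linarith

lemma IsBase.sRefl_basis_mem_posRoots (hΦ : IsRootSystem Φ) (hb : IsBase Φ b) {i : Fin r}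
    {β : E} (hβ : β ∈ posRoots Φ b) (hne : β ≠ b i) : sRefl (b i) β ∈ posRoots Φ b := by
  obtain ⟨j, hji, hj⟩ : ∃ j, j ≠ i ∧ 0 < b.repr β j := by
    by_contra! h
    have hβi : β = b.repr β i • b i := by
      conv_lhs => rw [← b.sum_repr β]
      exact Finset.sum_eq_single i (fun j _ hj => by rw [le_antisymm (h j hj) (hβ.2 j), zero_smul])
        (by simp)
    rcases hΦ.2.2.2.2.2 (b i) (hb.1 i) _ (hβi ▸ hβ.1) with h1 | h1
    · exact hne (by rw [hβi, h1, one_smul])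
    · linarith [hβ.2 i]
  have hγ := hΦ.sRefl_mem (hb.1 i) hβ.1
  refine ⟨hγ, (hb.repr_nonneg_or_nonpos hγ).resolve_right fun h => ?_⟩
  linarith [h j, repr_sRefl_basis_of_ne (b := b) hji β]

lemma exists_inner_basis_pos_of_mem_posRoots (hΦ : IsRootSystem Φ) {α : E}
    (hα : α ∈ posRoots Φ b) : ∃ i, 0 < ⟪b i, α⟫_ℝ := by
  have hαα : ⟪α, α⟫_ℝ = ∑ i, b.repr α i * ⟪b i, α⟫_ℝ := by
    nth_rw 1 [← b.sum_repr α]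
    simp only [sum_inner, real_inner_smul_left]
  obtain ⟨i, -, hi⟩ := Finset.exists_lt_of_sum_lt (s := Finset.univ) (f := fun _ => (0 : ℝ))
    (g := fun i => b.repr α i * ⟪b i, α⟫_ℝ)
    (by simpa [← hαα] using real_inner_self_pos.mpr (hΦ.ne_zero hα.1))
  exact ⟨i, pos_of_mul_pos_right hi (hα.2 i)⟩

lemma IsBase.inner_basis_nonpos (hΦ : IsRootSystem Φ) (hb : IsBase Φ b) {i j : Fin r}
    (hij : i ≠ j) : ⟪b i, b j⟫_ℝ ≤ 0 := by
  by_contra! h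
  have hc : 0 < 2 * ⟪b i, b j⟫_ℝ / ⟪b i, b i⟫_ℝ :=
    div_pos (by positivity) (real_inner_self_pos.mpr (hΦ.ne_zero (hb.1 i)))
  have hi : b.repr (sRefl (b i) (b j)) i = -(2 * ⟪b i, b j⟫_ℝ / ⟪b i, b i⟫_ℝ) := by
    simp [sRefl, hij]
  have hj : b.repr (sRefl (b i) (b j)) j = 1 := by
    simp [repr_sRefl_basis_of_ne hij.symm]
  rcases hb.repr_nonneg_or_nonpos (hΦ.sRefl_mem (hb.1 i) (hb.1 j)) with h' | h'
  · linarith [h' i]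
  · linarith [h' j]

noncomputable def simpleProd (b : Module.Basis (Fin r) ℝ E) (l : List (Fin r)) : E ≃ₗ[ℝ] E :=
  (l.map fun i => reflEquiv (b i)).prod

@[simp] lemma simpleProd_nil : simpleProd b [] = 1 := rfl

@[simp] lemma simpleProd_cons (i : Fin r) (l : List (Fin r)) :
    simpleProd b (i :: l) = reflEquiv (b i) * simpleProd b l := rfl

@[simp] lemma simpleProd_append (l l' : List (Fin r)) :
    simpleProd b (l ++ l') = simpleProd b l * simpleProd b l' := by
  simp [simpleProd]

lemma IsBase.simpleProd_mem_weylGroup (hb : IsBase Φ b) (l : List (Fin r)) :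
    simpleProd b l ∈ weylGroup Φ :=
  Subgroup.list_prod_mem _ (by simpa using fun i _ => reflEquiv_mem_weylGroup (hb.1 i))

lemma IsBase.exists_simpleProd_eq_reflEquiv (hΦ : IsRootSystem Φ) (hb : IsBase Φ b) {α : E}
    (hα : α ∈ Φ) : ∃ l, simpleProd b l = reflEquiv α := by
  suffices key : ∀ n : ℕ, ∀ α ∈ posRoots Φ b, height b α ≤ n →
      ∃ l, simpleProd b l = reflEquiv α by
    rcases hb.mem_posRoots_or_neg_mem hΦ hα with hα | hα
    · exact key _ α hα (exists_nat_ge _).choose_spec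
    · rw [← reflEquiv_neg]
      exact key _ (-α) hα (exists_nat_ge _).choose_spec
  intro n
  induction n with
  | zero => exact fun α hα hle => absurd (hb.one_le_height hΦ hα) (by push_cast at hle; linarith)
  | succ n ih =>
    intro α hα hle
    by_cases hsimple : ∃ i, α = b i
    · obtain ⟨i, rfl⟩ := hsimple
      exact ⟨[i], by simp⟩
    obtain ⟨i, hiα⟩ := exists_inner_basis_pos_of_mem_posRoots hΦ hα
    obtain ⟨l, hl⟩ := ih _ (hb.sRefl_basis_mem_posRoots hΦ hα fun h => hsimple ⟨i, h⟩) (by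
      rw [height_sRefl_basis]
      push_cast at hle
      linarith [hΦ.one_le_of_inner_pos (hb.1 i) hα.1 hiα])
    -- `s_α = s_i s_{s_i α} s_i`, and `s_i α` is a positive root of smaller height
    refine ⟨i :: l ++ [i], ?_⟩
    have hconj := reflEquiv_apply_eq_conj (w := reflEquiv (b i)) (inner_sRefl_sRefl (b i))
      (sRefl (b i) α)
    simp only [reflEquiv_apply, sRefl_sRefl] at hconj
    simp [hl, hconj, reflEquiv_inv, mul_assoc]

lemma IsBase.exists_simpleProd_eq (hΦ : IsRootSystem Φ) (hb : IsBase Φ b) {w : E ≃ₗ[ℝ] E}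
    (hw : w ∈ weylGroup Φ) : ∃ l, simpleProd b l = w :=
  weylGroup_induction (p := fun w => ∃ l, simpleProd b l = w) ⟨[], rfl⟩
    (fun α hα w ⟨l, hl⟩ => by
      obtain ⟨l', hl'⟩ := hb.exists_simpleProd_eq_reflEquiv hΦ hα
      exact ⟨l' ++ l, by rw [simpleProd_append, hl, hl']⟩) hw

lemma IsBase.exists_shorter_simpleProd_eq_mul_reflEquiv (hΦ : IsRootSystem Φ) (hb : IsBase Φ b)
    {α : E} (hα : α ∈ posRoots Φ b) :
    ∀ l, simpleProd b l α ∉ posRoots Φ b →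
      ∃ l', l'.length < l.length ∧ simpleProd b l' = simpleProd b l * reflEquiv α
  | [], h => absurd hα h
  | i :: l, h => by
    by_cases hl : simpleProd b l α ∈ posRoots Φ b
    · have hli : simpleProd b l α = b i :=
        not_not.mp fun hne => h (hb.sRefl_basis_mem_posRoots hΦ hl hne)
      have hconj := reflEquiv_apply_eq_conj
        (inner_map_map_of_mem_weylGroup (hb.simpleProd_mem_weylGroup l)) α
      rw [hli] at hconj
      exact ⟨l, by simp, by simp [hconj, mul_assoc, reflEquiv_mul_self]⟩
    · obtain ⟨l', hlt, heq⟩ := hb.exists_shorter_simpleProd_eq_mul_reflEquiv hΦ hα l hl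
      exact ⟨i :: l', by simpa using hlt, by rw [simpleProd_cons, simpleProd_cons, heq, mul_assoc]⟩

lemma IsBase.simpleProd_eq_one_of_mapsTo (hΦ : IsRootSystem Φ) (hb : IsBase Φ b)
    (l : List (Fin r)) (h : Set.MapsTo (simpleProd b l) (posRoots Φ b) (posRoots Φ b)) :
    simpleProd b l = 1 := by
  rcases l.eq_nil_or_concat' with rfl | ⟨L, i, rfl⟩
  · rfl
  have hL : simpleProd b L (b i) ∉ posRoots Φ b := fun hL => hb.neg_notMem_posRoots hΦ hL <| by
    simpa [sRefl_self (hΦ.ne_zero (hb.1 i))] using h (hb.basis_mem_posRoots i)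
  obtain ⟨l', hlt, heq⟩ :=
    hb.exists_shorter_simpleProd_eq_mul_reflEquiv hΦ (hb.basis_mem_posRoots i) L hL
  have hLi : simpleProd b (L ++ [i]) = simpleProd b l' := by simp [heq]
  rw [hLi] at h ⊢
  exact hb.simpleProd_eq_one_of_mapsTo hΦ l' h
termination_by l.length
decreasing_by subst_vars; simp only [List.length_append, List.length_singleton]; omega

lemma IsBase.eq_one_of_mapsTo (hΦ : IsRootSystem Φ) (hb : IsBase Φ b) {w : E ≃ₗ[ℝ] E}
    (hw : w ∈ weylGroup Φ) (h : Set.MapsTo w (posRoots Φ b) (posRoots Φ b)) : w = 1 := by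
  obtain ⟨l, rfl⟩ := hb.exists_simpleProd_eq hΦ hw
  exact hb.simpleProd_eq_one_of_mapsTo hΦ l h

lemma IsBase.eq_one_of_apply_eq_self (hΦ : IsRootSystem Φ) (hb : IsBase Φ b)
    (hρ : ∀ i, ⟪b i, ρ⟫_ℝ = 1) {w : E ≃ₗ[ℝ] E} (hw : w ∈ weylGroup Φ) (h : w ρ = ρ) : w = 1 :=
  hb.eq_one_of_mapsTo hΦ hw fun β hβ => by
    refine hb.mem_posRoots_of_height_pos hΦ (hΦ.apply_mem_of_mem_weylGroup hw hβ.1) ?_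
    rw [← inner_eq_height hρ, ← h, inner_map_map_of_mem_weylGroup hw, inner_eq_height hρ]
    linarith [hb.one_le_height hΦ hβ]

lemma Module.Basis.repr_nonneg_of_inner_nonneg {ι : Type*} [Fintype ι] (b : Module.Basis ι ℝ E)
    (hb : Pairwise fun i j => ⟪b i, b j⟫_ℝ ≤ 0) {x : E} (hx : ∀ i, 0 ≤ ⟪b i, x⟫_ℝ) (i : ι) :
    0 ≤ b.repr x i := by
  -- split `x = p + m` by the signs of its coordinates: `⟪m, m⟫ = ⟪m, x⟫ - ⟪m, p⟫ ≤ 0`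
  set p := ∑ i, max (b.repr x i) 0 • b i
  set m := ∑ i, min (b.repr x i) 0 • b i
  have hpm : x = p + m := by
    conv_lhs => rw [← b.sum_repr x]
    simp only [p, m, ← Finset.sum_add_distrib, ← add_smul, max_add_min, add_zero]
  have hmx : ⟪m, x⟫_ℝ ≤ 0 := by
    simp only [m, sum_inner, real_inner_smul_left]
    exact Finset.sum_nonpos fun i _ => mul_nonpos_of_nonpos_of_nonneg (min_le_right _ _) (hx i)
  have hmp : 0 ≤ ⟪m, p⟫_ℝ := by
    simp only [m, p, sum_inner, inner_sum, real_inner_smul_left, real_inner_smul_right]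
    refine Finset.sum_nonneg fun i _ => Finset.sum_nonneg fun j _ => ?_
    rcases eq_or_ne i j with rfl | hij
    · rcases le_total (b.repr x i) 0 with h | h <;> simp [h]
    · exact mul_nonneg (le_max_right _ _)
        (mul_nonneg_of_nonpos_of_nonpos (min_le_right _ _) (hb hij.symm))
  have hm : m = 0 := by
    refine real_inner_self_nonpos.mp ?_
    rw [hpm, inner_add_right] at hmx
    linarith
  exact min_eq_right_iff.mp (Fintype.linearIndependent_iff.mp b.linearIndependent _ hm i)

lemma IsBase.inner_nonneg_of_inner_basis_nonneg (hΦ : IsRootSystem Φ) (hb : IsBase Φ b)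
    (hρ : ∀ i, ⟪b i, ρ⟫_ℝ = 1) {y : E} (hy : ∀ i, 0 ≤ ⟪b i, y⟫_ℝ) : 0 ≤ ⟪ρ, y⟫_ℝ := by
  have hρ' := b.repr_nonneg_of_inner_nonneg (fun i j hij => hb.inner_basis_nonpos hΦ hij)
    (x := ρ) fun i => (hρ i).symm ▸ zero_le_one
  rw [← b.sum_repr ρ, sum_inner]
  exact Finset.sum_nonneg fun i _ => by rw [real_inner_smul_left]; exact mul_nonneg (hρ' i) (hy i)

lemma IsBase.norm_le_of_one_le_inner_basis (hΦ : IsRootSystem Φ) (hb : IsBase Φ b)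
    (hρ : ∀ i, ⟪b i, ρ⟫_ℝ = 1) {x : E} (hx : ∀ i, 1 ≤ ⟪b i, x⟫_ℝ) : ‖ρ‖ ≤ ‖x‖ := by
  have hy := hb.inner_nonneg_of_inner_basis_nonneg hΦ hρ (y := x - ρ) fun i => by
    rw [inner_sub_right, hρ i]
    linarith [hx i]
  have hx' : ‖x‖ ^ 2 = ‖ρ‖ ^ 2 + 2 * ⟪ρ, x - ρ⟫_ℝ + ‖x - ρ‖ ^ 2 := by
    rw [← norm_add_sq_real, add_sub_cancel]
  exact (sq_le_sq₀ (norm_nonneg _) (norm_nonneg _)).mp (by nlinarith [sq_nonneg ‖x - ρ‖])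

lemma IsBase.exists_mem_weylGroup_inner_basis_nonneg (hΦ : IsRootSystem Φ) (hb : IsBase Φ b)
    (x : E) : ∃ u ∈ weylGroup Φ, ∀ i, 0 ≤ ⟪b i, u x⟫_ℝ := by
  have := hΦ.finite_weylGroup
  obtain ⟨u, hu⟩ := Finite.exists_max fun u : weylGroup Φ => height b (u.1 x)
  refine ⟨u, u.2, fun i => ?_⟩
  by_contra! hneg
  have hlt := hu ⟨reflEquiv (b i) * u, mul_mem (reflEquiv_mem_weylGroup (hb.1 i)) u.2⟩
  have hc : 2 * ⟪b i, u.1 x⟫_ℝ / ⟪b i, b i⟫_ℝ < 0 :=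
    div_neg_of_neg_of_pos (by linarith) (real_inner_self_pos.mpr (hΦ.ne_zero (hb.1 i)))
  simp only [LinearEquiv.mul_apply, reflEquiv_apply, height_sRefl_basis] at hlt
  linarith

lemma IsBase.norm_le_of_one_le_abs_inner (hΦ : IsRootSystem Φ) (hb : IsBase Φ b)
    (hρ : ∀ i, ⟪b i, ρ⟫_ℝ = 1) {x : E} (hx : ∀ β ∈ posRoots Φ b, 1 ≤ |⟪β, x⟫_ℝ|) :
    ‖ρ‖ ≤ ‖x‖ := by
  obtain ⟨u, hu, hdom⟩ := hb.exists_mem_weylGroup_inner_basis_nonneg hΦ x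
  refine (hb.norm_le_of_one_le_inner_basis hΦ hρ fun i => ?_).trans_eq
    (norm_map_of_mem_weylGroup hu x)
  rw [← abs_of_nonneg (hdom i), real_inner_comm, inner_map_left_of_mem_weylGroup hu,
    real_inner_comm]
  rcases hb.mem_posRoots_or_neg_mem hΦ (hΦ.apply_mem_of_mem_weylGroup (inv_mem hu) (hb.1 i))
    with h | h
  · exact hx _ h
  · simpa using hx _ h

lemma IsBase.norm_average_lt (hΦ : IsRootSystem Φ) (hb : IsBase Φ b)
    (hρ : ∀ i, ⟪b i, ρ⟫_ℝ = 1) {s : Finset (E ≃ₗ[ℝ] E)} (hs : ∀ w ∈ s, w ∈ weylGroup Φ)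
    (hcard : 1 < s.card) : ‖(s.card : ℝ)⁻¹ • ∑ w ∈ s, w⁻¹ ρ‖ < ‖ρ‖ := by
  obtain ⟨w, hw, w', hw', hne⟩ := Finset.one_lt_card.mp hcard
  have hpos : (0 : ℝ) < s.card := by exact_mod_cast (zero_lt_one.trans hcard)
  rw [Finset.smul_sum]
  refine norm_sum_lt_of_strictConvexSpace (fun _ _ => by positivity) ?_ hw hw' (fun h => hne ?_)
    (by positivity) (by positivity) fun v hv => (norm_map_of_mem_weylGroup (inv_mem (hs v hv)) ρ).le
  · simp [hpos.ne']
  · have hfix : (w' * w⁻¹) ρ = ρ := by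
      rw [LinearEquiv.mul_apply, h, ← LinearEquiv.mul_apply, mul_inv_cancel]
      rfl
    exact (mul_inv_eq_one.mp
      (hb.eq_one_of_apply_eq_self hΦ hρ (mul_mem (hs w' hw') (inv_mem (hs w hw))) hfix)).symm

lemma IsBase.exists_abs_average_inner_lt_one (hΦ : IsRootSystem Φ) (hb : IsBase Φ b)
    (hρ : ∀ i, ⟪b i, ρ⟫_ℝ = 1) {s : Finset (E ≃ₗ[ℝ] E)} (hs : ∀ w ∈ s, w ∈ weylGroup Φ)
    (hcard : 1 < s.card) :
    ∃ β ∈ posRoots Φ b, |(s.card : ℝ)⁻¹ * ∑ w ∈ s, ⟪w β, ρ⟫_ℝ| < 1 := by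
  have havg : ∀ β, (s.card : ℝ)⁻¹ * ∑ w ∈ s, ⟪w β, ρ⟫_ℝ =
      ⟪β, (s.card : ℝ)⁻¹ • ∑ w ∈ s, w⁻¹ ρ⟫_ℝ := fun β => by
    rw [real_inner_smul_right, inner_sum]
    exact congrArg _
      (Finset.sum_congr rfl fun w hw => inner_map_left_of_mem_weylGroup (hs w hw) β ρ)
  by_contra! h
  exact (hb.norm_average_lt hΦ hρ hs hcard).not_ge
    (hb.norm_le_of_one_le_abs_inner hΦ hρ fun β hβ => havg β ▸ h β hβ)

end

theorem stmt7_general {E : Type*} [NormedAddCommGroup E] [InnerProductSpace ℝ E]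
    (Φ : Set E) (hΦ : IsRootSystem Φ) {r : ℕ} (b : Module.Basis (Fin r) ℝ E) (hb : IsBase Φ b)
    (ω : Fin r → E) (hω : ∀ i j, ⟪b i, ω j⟫_ℝ = if i = j then 1 else 0)
    (D A : Set E)
    (hC : 1 < (convexSubset Φ b D A).ncard) :
    ∃ β ∈ posRoots Φ b,
      |((convexSubset Φ b D A).ncard : ℝ)⁻¹ *
          ∑ᶠ w ∈ convexSubset Φ b D A, ⟪w β, ∑ i, ω i⟫_ℝ| < 1 := by
  have hfin : (convexSubset Φ b D A).Finite := Set.finite_of_ncard_pos (by omega)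
  have hρ : ∀ i, ⟪b i, ∑ j, ω j⟫_ℝ = 1 := fun i => by simp [inner_sum, hω]
  simp only [finsum_mem_eq_finite_toFinset_sum _ hfin, Set.ncard_eq_toFinset_card _ hfin] at hC ⊢
  exact hb.exists_abs_average_inner_lt_one hΦ hρ (fun w hw => (hfin.mem_toFinset.mp hw).1) hC

/-- Let `C = W_D^A` for some `D ⊆ A ⊆ Φ⁺` with `|C| > 1`, and for `β ∈ Φ`
define `h(β) = (1/|C|) Σ_{w∈C} ht(wβ)`, where `ht(γ) = ⟨γ, ω₁∨ + ⋯ + ω_r∨⟩` and the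
fundamental coweights `ω₁∨, …, ω_r∨` form the dual basis of the base.  Then there exists
`β ∈ Φ⁺` with `|h(β)| < 1`. -/
theorem stmt7 {E : Type*} [NormedAddCommGroup E] [InnerProductSpace ℝ E]
    (Φ : Set E) (hΦ : IsRootSystem Φ) {r : ℕ} (b : Module.Basis (Fin r) ℝ E) (hb : IsBase Φ b)
    (ω : Fin r → E) (hω : ∀ i j, ⟪b i, ω j⟫_ℝ = if i = j then 1 else 0)
    (D A : Set E) (hD : D ⊆ A) (hA : A ⊆ posRoots Φ b)
    (hC : 1 < (convexSubset Φ b D A).ncard) :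
    ∃ β ∈ posRoots Φ b,
      |((convexSubset Φ b D A).ncard : ℝ)⁻¹ *
          ∑ᶠ w ∈ convexSubset Φ b D A, ⟪w β, ∑ i, ω i⟫_ℝ| < 1 :=
  stmt7_general Φ hΦ b hb ω hω D A hC
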